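/- Assume C^all is positive definite. Then the linear subspace of ℝ^d spanned by the set of all vectors w for which there exists λ ∈ (0,1) with C^within w = λ · C^all w has dimension at most rank(Q), and in particular at most M − 1. In words: at most M − 1 linearly independent generalized eigenvectors can have generalized eigenvalue strictly between 0 and 1. -/
import Mathlib

open Matrix Module

lemma vmv_mulVec {d : ℕ} (a b w : Fin d → ℝ) :
    (vecMulVec a b).mulVec w = (b ⬝ᵥ w) • a := by
  ext i
  simp only [vecMulVec, mulVec, dotProduct, Pi.smul_apply, smul_eq_mul, of_apply]
  rw [Finset.sum_mul]
  exact Finset.sum_congr rfl fun j _ => by ring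

lemma sum_mulVec' {ι : Type*} {d : ℕ} (s : Finset ι) (A : ι → Matrix (Fin d) (Fin d) ℝ)
    (w : Fin d → ℝ) : (∑ m ∈ s, A m).mulVec w = ∑ m ∈ s, (A m).mulVec w := by
  ext i
  simp only [mulVec, dotProduct, Matrix.sum_apply, Finset.sum_apply, Finset.sum_mul]
  rw [Finset.sum_comm]

lemma finrank_span_range_le_sub_one {V : Type*} [AddCommGroup V] [Module ℝ V]
    [FiniteDimensional ℝ V] {M : ℕ} (hM : 1 ≤ M) (u : Fin M → V)
    (h0 : ∑ m, u m = 0) :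
    Module.finrank ℝ (Submodule.span ℝ (Set.range u)) ≤ M - 1 := by
  classical
  have hM0 : M - 1 < M := by omega
  set m0 : Fin M := ⟨M - 1, hM0⟩
  set t : Finset (Fin M) := Finset.univ.erase m0 with ht
  have hcard : t.card = M - 1 := by
    simp [ht, Finset.card_erase_of_mem]
  have hm0 : u m0 = -∑ m ∈ t, u m := by
    have h := Finset.add_sum_erase Finset.univ u (Finset.mem_univ m0)
    rw [h0] at h
    exact eq_neg_of_add_eq_zero_left h
  have hspan : Submodule.span ℝ (Set.range u) ≤ Submodule.span ℝ ↑(t.image u) := by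
    rw [Submodule.span_le]
    rintro _ ⟨m, rfl⟩
    by_cases hm : m = m0
    · subst hm
      rw [hm0]
      exact Submodule.neg_mem _ (Submodule.sum_mem _ fun m hmt =>
        Submodule.subset_span (by
          simp only [Finset.coe_image, Set.mem_image, Finset.mem_coe]
          exact ⟨m, hmt, rfl⟩))
    · exact Submodule.subset_span (by
        simp only [Finset.coe_image, Set.mem_image, Finset.mem_coe]
        exact ⟨m, by simp [ht, hm], rfl⟩)
  have h1 := Submodule.finrank_mono (M := V) hspan
  have h2 := finrank_span_finset_le_card (R := ℝ) (t.image u)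
  have h3 : (t.image u).card ≤ t.card := Finset.card_image_le
  rw [Set.finrank] at h2
  omega

open Matrix in
theorem stmt_15 (d M : ℕ) (hM : 1 ≤ M)
    (n : Fin M → ℕ) (hn : ∀ m, 1 ≤ n m)
    (x : (m : Fin M) → Fin (n m) → (Fin d → ℝ))
    (p : Fin M → ℝ) (hp : ∀ m, 0 ≤ p m) (hpsum : ∑ m, p m = 1)
    (μ : Fin M → (Fin d → ℝ)) (hμ : ∀ m, μ m = (n m : ℝ)⁻¹ • ∑ i, x m i)
    (μall : Fin d → ℝ) (hμall : μall = ∑ m, p m • μ m)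
    (Cwithin : Matrix (Fin d) (Fin d) ℝ)
    (hCwithin : Cwithin = ∑ m, (p m * (n m : ℝ)⁻¹) •
      ∑ i, Matrix.vecMulVec (x m i - μ m) (x m i - μ m))
    (Call : Matrix (Fin d) (Fin d) ℝ)
    (hCall : Call = ∑ m, (p m * (n m : ℝ)⁻¹) •
      ∑ i, Matrix.vecMulVec (x m i - μall) (x m i - μall))
    (Q : Matrix (Fin d) (Fin d) ℝ)
    (hQ : Q = ∑ m, p m • Matrix.vecMulVec (μ m - μall) (μ m - μall))
    (hpos : Call.PosDef) :
    Module.finrank ℝ (Submodule.span ℝ {w : Fin d → ℝ |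
        ∃ lam ∈ Set.Ioo (0 : ℝ) 1, Cwithin.mulVec w = lam • Call.mulVec w})
      ≤ Q.rank ∧
    Module.finrank ℝ (Submodule.span ℝ {w : Fin d → ℝ |
        ∃ lam ∈ Set.Ioo (0 : ℝ) 1, Cwithin.mulVec w = lam • Call.mulVec w})
      ≤ M - 1 := by
  classical
  have hnne : ∀ m, (n m : ℝ) ≠ 0 := fun m => Nat.cast_ne_zero.mpr (by have := hn m; omega)
  -- centering identity, coordinatewise
  have hcenter : ∀ m (r : Fin d), ∑ i, (x m i r - μ m r) = 0 := by
    intro m r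
    have hμr : μ m r = (n m : ℝ)⁻¹ * ∑ i, x m i r := by
      rw [hμ m]; simp [Finset.sum_apply]
    rw [Finset.sum_sub_distrib, Finset.sum_const, Finset.card_univ, Fintype.card_fin,
      nsmul_eq_mul, hμr, ← mul_assoc, mul_inv_cancel₀ (hnne m), one_mul, sub_self]
  -- decomposition Call = Cwithin + Q
  have hdec : Call = Cwithin + Q := by
    rw [hCall, hCwithin, hQ, ← Finset.sum_add_distrib]
    refine Finset.sum_congr rfl fun m _ => ?_
    ext r s
    simp only [Matrix.add_apply, Matrix.smul_apply, Matrix.sum_apply, vecMulVec_apply,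
      Pi.sub_apply, smul_eq_mul]
    have hA := hcenter m r
    have hB := hcenter m s
    have hni : (n m : ℝ)⁻¹ * (n m : ℝ) = 1 := inv_mul_cancel₀ (hnne m)
    have key : ∑ i, (x m i r - μall r) * (x m i s - μall s)
        = ∑ i, (x m i r - μ m r) * (x m i s - μ m s)
          + (n m : ℝ) * ((μ m r - μall r) * (μ m s - μall s)) := by
      calc ∑ i, (x m i r - μall r) * (x m i s - μall s)
          = ∑ i, ((x m i r - μ m r) * (x m i s - μ m s)
              + (μ m r - μall r) * (x m i s - μ m s)
              + (x m i r - μ m r) * (μ m s - μall s)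
              + (μ m r - μall r) * (μ m s - μall s)) :=
            Finset.sum_congr rfl fun i _ => by ring
        _ = ∑ i, (x m i r - μ m r) * (x m i s - μ m s)
              + (μ m r - μall r) * ∑ i, (x m i s - μ m s)
              + (∑ i, (x m i r - μ m r)) * (μ m s - μall s)
              + (n m : ℝ) * ((μ m r - μall r) * (μ m s - μall s)) := by
            rw [Finset.sum_add_distrib, Finset.sum_add_distrib, Finset.sum_add_distrib,
              ← Finset.mul_sum, ← Finset.sum_mul, Finset.sum_const, Finset.card_univ,
              Fintype.card_fin, nsmul_eq_mul]
        _ = _ := by rw [hA, hB]; ring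
    rw [key, mul_add]
    congr 1
    rw [mul_assoc, ← mul_assoc ((n m : ℝ)⁻¹), hni, one_mul]
  -- injectivity of Call
  have hinj : Function.Injective Call.mulVecLin := by
    have h := Matrix.mulVec_injective_iff_isUnit.mpr hpos.isUnit
    have : ⇑Call.mulVecLin = Call.mulVec := funext fun v => Matrix.mulVecLin_apply Call v
    rwa [this]
  set S : Set (Fin d → ℝ) := {w : Fin d → ℝ |
      ∃ lam ∈ Set.Ioo (0 : ℝ) 1, Cwithin.mulVec w = lam • Call.mulVec w} with hS
  -- the image of span S under Call lands in range Q
  have hmap : Submodule.map Call.mulVecLin (Submodule.span ℝ S)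
      ≤ LinearMap.range Q.mulVecLin := by
    rw [Submodule.map_span, Submodule.span_le]
    rintro _ ⟨w, ⟨lam, hlam, hw⟩, rfl⟩
    have h1 : Call.mulVec w = lam • Call.mulVec w + Q.mulVec w := by
      conv_lhs => rw [hdec]
      rw [Matrix.add_mulVec, hw]
    have h2 : Q.mulVec w = (1 - lam) • Call.mulVec w := by
      rw [sub_smul, one_smul]
      exact eq_sub_of_add_eq' h1.symm
    have hne : (1 : ℝ) - lam ≠ 0 := sub_ne_zero.mpr (ne_of_lt hlam.2).symm
    refine ⟨(1 - lam)⁻¹ • w, ?_⟩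
    rw [LinearMap.map_smul, Matrix.mulVecLin_apply, Matrix.mulVecLin_apply, h2, smul_smul,
      inv_mul_cancel₀ hne, one_smul]
  -- part 1
  have hrank1 : Module.finrank ℝ (Submodule.span ℝ S) ≤ Q.rank := by
    have e := Submodule.equivMapOfInjective Call.mulVecLin hinj (Submodule.span ℝ S)
    have h1 := e.finrank_eq
    have h2 := Submodule.finrank_mono (M := Fin d → ℝ) hmap
    rw [Matrix.rank]
    omega
  -- part 2 : rank Q ≤ M - 1
  set v : Fin M → (Fin d → ℝ) := fun m => μ m - μall with hv
  set u : Fin M → (Fin d → ℝ) := fun m => p m • v m with hu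
  have hu0 : ∑ m, u m = 0 := by
    simp only [hu, hv, smul_sub]
    rw [Finset.sum_sub_distrib, ← hμall, ← Finset.sum_smul, hpsum, one_smul, sub_self]
  have hrange : LinearMap.range Q.mulVecLin ≤ Submodule.span ℝ (Set.range u) := by
    rintro _ ⟨w, rfl⟩
    have hQw : Q.mulVecLin w = ∑ m, (v m ⬝ᵥ w) • u m := by
      rw [Matrix.mulVecLin_apply, hQ, sum_mulVec']
      refine Finset.sum_congr rfl fun m _ => ?_
      rw [Matrix.smul_mulVec, vmv_mulVec, smul_smul, hu, smul_smul, mul_comm]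
    rw [hQw]
    exact Submodule.sum_mem _ fun m _ =>
      Submodule.smul_mem _ _ (Submodule.subset_span ⟨m, rfl⟩)
  have hrank2 : Q.rank ≤ M - 1 := by
    have h1 := Submodule.finrank_mono (M := Fin d → ℝ) hrange
    have h2 := finrank_span_range_le_sub_one hM u hu0
    rw [Matrix.rank]
    omega
  exact ⟨hrank1, le_trans hrank1 hrank2⟩
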